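/- For real a > 0 and b > 0, the cubic equation t(1-t)(1-(b+1)t) + (a/4)(1-2t) = 0 has three real roots: one in the closed interval [0,1], one greater than 1, and one negative. -/

import Mathlib

/-!
The cubic `f(t) = t(1-t)(1-(b+1)t) + (a/4)(1-2t)` has `f(0) = a/4 > 0` and `f(1) = -a/4 < 0`,
while `f(2+a) > 0` and `f(-1-a) < 0`. The intermediate value theorem gives a root in each of
`(-1-a, 0)`, `(0, 1)` and `(1, 2+a)`, and a cubic with nonzero leading coefficient `b+1` has no
further roots.
-/

open Set

theorem eq_or_eq_or_eq_of_cubic_eq_zero {K : Type*} [Field K] {c p q r x y z t : K}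
    (hc : c ≠ 0) (hxy : x ≠ y) (hxz : x ≠ z) (hyz : y ≠ z)
    (hx : c * x ^ 3 + p * x ^ 2 + q * x + r = 0) (hy : c * y ^ 3 + p * y ^ 2 + q * y + r = 0)
    (hz : c * z ^ 3 + p * z ^ 2 + q * z + r = 0) (ht : c * t ^ 3 + p * t ^ 2 + q * t + r = 0) :
    t = x ∨ t = y ∨ t = z := by
  -- Lagrange interpolation at `x, y, z` of the cubic minus `c (t - x) (t - y) (t - z)`
  have key : (x - y) * (x - z) * (y - z) * (c * ((t - x) * (t - y) * (t - z))) = 0 := by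
    linear_combination (x - y) * (x - z) * (y - z) * ht - (t - y) * (t - z) * (y - z) * hx
      + (t - x) * (t - z) * (x - z) * hy - (t - x) * (t - y) * (x - y) * hz
  simp only [mul_eq_zero, sub_eq_zero] at key
  tauto

noncomputable def saddleCubic (a b t : ℝ) : ℝ :=
  t * (1 - t) * (1 - (b + 1) * t) + (a / 4) * (1 - 2 * t)

section saddleCubic

variable {a b : ℝ}

theorem saddleCubic_eq (t : ℝ) :
    saddleCubic a b t = (b + 1) * t ^ 3 + -(b + 2) * t ^ 2 + (1 - a / 2) * t + a / 4 := by
  unfold saddleCubic; ring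

theorem continuous_saddleCubic : Continuous (saddleCubic a b) := by
  unfold saddleCubic; fun_prop

theorem saddleCubic_zero : saddleCubic a b 0 = a / 4 := by
  norm_num [saddleCubic]

theorem saddleCubic_one : saddleCubic a b 1 = -(a / 4) := by
  norm_num [saddleCubic]

theorem saddleCubic_two_add_pos (ha : 0 < a) (hb : 0 ≤ b) : 0 < saddleCubic a b (2 + a) := by
  unfold saddleCubic
  nlinarith [mul_pos ha ha, mul_nonneg ha.le hb, mul_nonneg (mul_pos ha ha).le hb]

theorem saddleCubic_neg_one_sub_neg (ha : 0 < a) (hb : 0 < b + 1) :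
    saddleCubic a b (-1 - a) < 0 := by
  unfold saddleCubic
  nlinarith [mul_pos ha ha, mul_pos ha hb, mul_pos (mul_pos ha ha) hb, mul_pos (mul_pos ha ha) ha]

end saddleCubic

theorem saddle_cubic_roots_ab (a b : ℝ) (ha : 0 < a) (hb : 0 < b) :
    ∃ t0 t1 t2 : ℝ,
      t0 ∈ Set.Icc (0:ℝ) 1 ∧
        t0 * (1 - t0) * (1 - (b+1)*t0) + (a/4) * (1 - 2*t0) = 0 ∧
      1 < t1 ∧ t1 * (1 - t1) * (1 - (b+1)*t1) + (a/4) * (1 - 2*t1) = 0 ∧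
      t2 < 0 ∧ t2 * (1 - t2) * (1 - (b+1)*t2) + (a/4) * (1 - 2*t2) = 0 ∧
      ∀ t : ℝ, t * (1 - t) * (1 - (b+1)*t) + (a/4) * (1 - 2*t) = 0 →
        t = t0 ∨ t = t1 ∨ t = t2 := by
  have h0 : 0 < saddleCubic a b 0 := by rw [saddleCubic_zero]; positivity
  have h1 : saddleCubic a b 1 < 0 := by rw [saddleCubic_one]; linarith
  obtain ⟨t0, ht0, hf0⟩ := intermediate_value_Ioo' zero_le_one continuous_saddleCubic.continuousOn ⟨h1, h0⟩
  obtain ⟨t1, ht1, hf1⟩ := intermediate_value_Ioo (by linarith : (1 : ℝ) ≤ 2 + a) continuous_saddleCubic.continuousOn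
    ⟨h1, saddleCubic_two_add_pos ha hb.le⟩
  obtain ⟨t2, ht2, hf2⟩ := intermediate_value_Ioo (by linarith : -1 - a ≤ 0) continuous_saddleCubic.continuousOn
    ⟨saddleCubic_neg_one_sub_neg ha (by linarith), h0⟩
  refine ⟨t0, t1, t2, Ioo_subset_Icc_self ht0, hf0, ht1.1, hf1, ht2.2, hf2, fun t ht => ?_⟩
  change saddleCubic a b t = 0 at ht
  rw [saddleCubic_eq] at hf0 hf1 hf2 ht
  exact eq_or_eq_or_eq_of_cubic_eq_zero (by linarith) (ht0.2.trans ht1.1).ne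
    (ht2.2.trans ht0.1).ne' (ht2.2.trans (zero_lt_one.trans ht1.1)).ne' hf0 hf1 hf2 ht
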